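/- arXiv:1708.03681 — 5 statements merged into one kernel-verified Lean document; each statement's English description precedes it below -/
import Mathlib

section
/- Let Ã₀ be the 9×9 positive diagonal matrix diag(μα'/ρ̄, μ, μ, μ, μβ'/γ', μβ''/γ'', 1, 1, 1) and let A_j (j=1,2,3) be the coefficient matrices of the linearized radiative Euler–MHD system given in the paper. Then for each j, the matrix Ã_j = Ã₀·A_j is symmetric. -/
open Matrix

/-- The coefficient matrices `A₁, A₂, A₃` of the linearized radiative Euler–MHD
system. -/
noncomputable def stmtA1 (ρ α' β' β'' γ' γ'' μ B1 B2 B3 : ℝ) : Matrix (Fin 9) (Fin 9) ℝ :=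
  !![0, ρ, 0, 0, 0, 0, 0, 0, 0;
     α', 0, 0, 0, β', β'', 0, B2 / μ, B3 / μ;
     0, 0, 0, 0, 0, 0, 0, -(B1 / μ), 0;
     0, 0, 0, 0, 0, 0, 0, 0, -(B1 / μ);
     0, γ', 0, 0, 0, 0, 0, 0, 0;
     0, γ'', 0, 0, 0, 0, 0, 0, 0;
     0, 0, 0, 0, 0, 0, 0, 0, 0;
     0, B2, -B1, 0, 0, 0, 0, 0, 0;
     0, B3, 0, -B1, 0, 0, 0, 0, 0]

noncomputable def stmtA2 (ρ α' β' β'' γ' γ'' μ B1 B2 B3 : ℝ) : Matrix (Fin 9) (Fin 9) ℝ :=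
  !![0, 0, ρ, 0, 0, 0, 0, 0, 0;
     0, 0, 0, 0, 0, 0, -(B2 / μ), 0, 0;
     α', 0, 0, 0, β', β'', B1 / μ, 0, B3 / μ;
     0, 0, 0, 0, 0, 0, 0, 0, -(B2 / μ);
     0, 0, γ', 0, 0, 0, 0, 0, 0;
     0, 0, γ'', 0, 0, 0, 0, 0, 0;
     0, -B2, B1, 0, 0, 0, 0, 0, 0;
     0, 0, 0, 0, 0, 0, 0, 0, 0;
     0, 0, B3, -B2, 0, 0, 0, 0, 0]

noncomputable def stmtA3 (ρ α' β' β'' γ' γ'' μ B1 B2 B3 : ℝ) : Matrix (Fin 9) (Fin 9) ℝ :=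
  !![0, 0, 0, ρ, 0, 0, 0, 0, 0;
     0, 0, 0, 0, 0, 0, -(B3 / μ), 0, 0;
     0, 0, 0, 0, 0, 0, 0, -(B3 / μ), 0;
     α', 0, 0, 0, β', β'', B1 / μ, B2 / μ, 0;
     0, 0, 0, γ', 0, 0, 0, 0, 0;
     0, 0, 0, γ'', 0, 0, 0, 0, 0;
     0, -B3, 0, B1, 0, 0, 0, 0, 0;
     0, 0, -B3, B2, 0, 0, 0, 0, 0;
     0, 0, 0, 0, 0, 0, 0, 0, 0]

/-- The diagonal symmetrizer `Ã₀`. -/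
noncomputable def stmtA0 (ρ α' β' β'' γ' γ'' μ : ℝ) : Matrix (Fin 9) (Fin 9) ℝ :=
  Matrix.diagonal ![μ * α' / ρ, μ, μ, μ, μ * β' / γ', μ * β'' / γ'', 1, 1, 1]

lemma vec9_0 {α : Type*} (a0 a1 a2 a3 a4 a5 a6 a7 a8 : α) (h : (0:ℕ) < 9) :
    ![a0, a1, a2, a3, a4, a5, a6, a7, a8] ⟨0, h⟩ = a0 := rfl
lemma vec9_1 {α : Type*} (a0 a1 a2 a3 a4 a5 a6 a7 a8 : α) (h : (1:ℕ) < 9) :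
    ![a0, a1, a2, a3, a4, a5, a6, a7, a8] ⟨1, h⟩ = a1 := rfl
lemma vec9_2 {α : Type*} (a0 a1 a2 a3 a4 a5 a6 a7 a8 : α) (h : (2:ℕ) < 9) :
    ![a0, a1, a2, a3, a4, a5, a6, a7, a8] ⟨2, h⟩ = a2 := rfl
lemma vec9_3 {α : Type*} (a0 a1 a2 a3 a4 a5 a6 a7 a8 : α) (h : (3:ℕ) < 9) :
    ![a0, a1, a2, a3, a4, a5, a6, a7, a8] ⟨3, h⟩ = a3 := rfl
lemma vec9_4 {α : Type*} (a0 a1 a2 a3 a4 a5 a6 a7 a8 : α) (h : (4:ℕ) < 9) :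
    ![a0, a1, a2, a3, a4, a5, a6, a7, a8] ⟨4, h⟩ = a4 := rfl
lemma vec9_5 {α : Type*} (a0 a1 a2 a3 a4 a5 a6 a7 a8 : α) (h : (5:ℕ) < 9) :
    ![a0, a1, a2, a3, a4, a5, a6, a7, a8] ⟨5, h⟩ = a5 := rfl
lemma vec9_6 {α : Type*} (a0 a1 a2 a3 a4 a5 a6 a7 a8 : α) (h : (6:ℕ) < 9) :
    ![a0, a1, a2, a3, a4, a5, a6, a7, a8] ⟨6, h⟩ = a6 := rfl
lemma vec9_7 {α : Type*} (a0 a1 a2 a3 a4 a5 a6 a7 a8 : α) (h : (7:ℕ) < 9) :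
    ![a0, a1, a2, a3, a4, a5, a6, a7, a8] ⟨7, h⟩ = a7 := rfl
lemma vec9_8 {α : Type*} (a0 a1 a2 a3 a4 a5 a6 a7 a8 : α) (h : (8:ℕ) < 9) :
    ![a0, a1, a2, a3, a4, a5, a6, a7, a8] ⟨8, h⟩ = a8 := rfl

lemma diag_mul_isSymm (d : Fin 9 → ℝ) (M : Matrix (Fin 9) (Fin 9) ℝ)
    (h : ∀ i j, d j * M j i = d i * M i j) :
    (Matrix.diagonal d * M).IsSymm := by
  ext i j
  rw [Matrix.transpose_apply, Matrix.diagonal_mul, Matrix.diagonal_mul]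
  exact h i j

set_option maxHeartbeats 1000000 in
/-- Multiplying each coefficient matrix `A_j` of the linearized radiative
Euler–MHD system on the left by the diagonal symmetrizer `Ã₀` yields a
symmetric matrix. -/
theorem stmt_6 (ρbar pρ pθ Cv a θbar μ α' β' β'' γ' γ'' B1 B2 B3 : ℝ)
    (hρ : 0 < ρbar) (hpρ : 0 < pρ) (hpθ : 0 < pθ) (hCv : 0 < Cv)
    (ha : 0 < a) (hθ : 0 < θbar) (hμ : 0 < μ)
    (hα' : α' = pρ / ρbar) (hβ' : β' = pθ / ρbar) (hβ'' : β'' = 1 / (3 * ρbar))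
    (hγ' : γ' = pθ / Cv) (hγ'' : γ'' = (4:ℝ)/3 * a * θbar ^ 4) :
    (stmtA0 ρbar α' β' β'' γ' γ'' μ * stmtA1 ρbar α' β' β'' γ' γ'' μ B1 B2 B3).IsSymm ∧
    (stmtA0 ρbar α' β' β'' γ' γ'' μ * stmtA2 ρbar α' β' β'' γ' γ'' μ B1 B2 B3).IsSymm ∧
    (stmtA0 ρbar α' β' β'' γ' γ'' μ * stmtA3 ρbar α' β' β'' γ' γ'' μ B1 B2 B3).IsSymm := by
  have hρ0 : ρbar ≠ 0 := hρ.ne'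
  have hμ0 : μ ≠ 0 := hμ.ne'
  have hγ'0 : γ' ≠ 0 := by rw [hγ']; positivity
  have hγ''0 : γ'' ≠ 0 := by rw [hγ'']; positivity
  have h1 : μ * α' / ρbar * ρbar = μ * α' := div_mul_cancel₀ _ hρ0
  have h2 : μ * β' / γ' * γ' = μ * β' := div_mul_cancel₀ _ hγ'0
  have h3 : μ * β'' / γ'' * γ'' = μ * β'' := div_mul_cancel₀ _ hγ''0
  have h4 : ∀ b : ℝ, μ * (b / μ) = b := fun b => by
    rw [mul_comm, div_mul_cancel₀ b hμ0]
  refine ⟨?_, ?_, ?_⟩ <;> rw [stmtA0] <;> apply diag_mul_isSymm <;> intro i j <;>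
    fin_cases i <;> fin_cases j <;>
      simp only [stmtA1, stmtA2, stmtA3, Matrix.of_apply, vec9_0, vec9_1, vec9_2, vec9_3,
        vec9_4, vec9_5, vec9_6, vec9_7, vec9_8] <;>
      (try simp only [h1, h2, h3, h4, mul_neg]) <;> ring1
end

section
/- Let ξ ∈ ℝ³ with |ξ| = 1, and let 𝒜(ξ) be the 9×9 symmetric matrix of the Fourier-transformed linearized radiative Euler–MHD system with ν > 0, and let ℬ(ξ) = B̃ + |ξ|²D̃ be the corresponding dissipation matrix. Then ker ℬ(ξ) is spanned by e₁ = (1,0,0,0,0,0,0,0,0), and no nonzero element of ker ℬ(ξ) is an eigenvector of (Ã₀)⁻¹𝒜(ξ); i.e. the Shizuta–Kawashima condition holds. -/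
open Matrix

/-- Symmetrized coefficient matrices `Ã_j = Ã₀ A_j` of the linearized radiative
Euler–MHD system. -/
noncomputable def skAt1 (μ α' β' β'' B1 B2 B3 : ℝ) : Matrix (Fin 9) (Fin 9) ℝ :=
  !![0, μ * α', 0, 0, 0, 0, 0, 0, 0;
     μ * α', 0, 0, 0, μ * β', μ * β'', 0, B2, B3;
     0, 0, 0, 0, 0, 0, 0, -B1, 0;
     0, 0, 0, 0, 0, 0, 0, 0, -B1;
     0, μ * β', 0, 0, 0, 0, 0, 0, 0;
     0, μ * β'', 0, 0, 0, 0, 0, 0, 0;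
     0, 0, 0, 0, 0, 0, 0, 0, 0;
     0, B2, -B1, 0, 0, 0, 0, 0, 0;
     0, B3, 0, -B1, 0, 0, 0, 0, 0]

noncomputable def skAt2 (μ α' β' β'' B1 B2 B3 : ℝ) : Matrix (Fin 9) (Fin 9) ℝ :=
  !![0, 0, μ * α', 0, 0, 0, 0, 0, 0;
     0, 0, 0, 0, 0, 0, -B2, 0, 0;
     μ * α', 0, 0, 0, μ * β', μ * β'', B1, 0, B3;
     0, 0, 0, 0, 0, 0, 0, 0, -B2;
     0, 0, μ * β', 0, 0, 0, 0, 0, 0;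
     0, 0, μ * β'', 0, 0, 0, 0, 0, 0;
     0, -B2, B1, 0, 0, 0, 0, 0, 0;
     0, 0, 0, 0, 0, 0, 0, 0, 0;
     0, 0, B3, -B2, 0, 0, 0, 0, 0]

noncomputable def skAt3 (μ α' β' β'' B1 B2 B3 : ℝ) : Matrix (Fin 9) (Fin 9) ℝ :=
  !![0, 0, 0, μ * α', 0, 0, 0, 0, 0;
     0, 0, 0, 0, 0, 0, -B3, 0, 0;
     0, 0, 0, 0, 0, 0, 0, -B3, 0;
     μ * α', 0, 0, 0, μ * β', μ * β'', B1, B2, 0;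
     0, 0, 0, μ * β', 0, 0, 0, 0, 0;
     0, 0, 0, μ * β'', 0, 0, 0, 0, 0;
     0, -B3, 0, B1, 0, 0, 0, 0, 0;
     0, 0, -B3, B2, 0, 0, 0, 0, 0;
     0, 0, 0, 0, 0, 0, 0, 0, 0]

/-- The symbol `𝒜(ξ) = ξ₁Ã₁ + ξ₂Ã₂ + ξ₃Ã₃`. -/
noncomputable def skA (μ α' β' β'' B1 B2 B3 : ℝ) (ξ : Fin 3 → ℝ) :
    Matrix (Fin 9) (Fin 9) ℝ :=
  ξ 0 • skAt1 μ α' β' β'' B1 B2 B3 + ξ 1 • skAt2 μ α' β' β'' B1 B2 B3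
    + ξ 2 • skAt3 μ α' β' β'' B1 B2 B3

/-- The diagonal symmetrizer `Ã₀`. -/
noncomputable def skA0 (μ ρ α' β' β'' γ' γ'' : ℝ) : Matrix (Fin 9) (Fin 9) ℝ :=
  Matrix.diagonal ![μ * α' / ρ, μ, μ, μ, μ * β' / γ', μ * β'' / γ'', 1, 1, 1]

/-- The dissipation matrix `ℬ(ξ) = B̃ + |ξ|² D̃`. -/
noncomputable def skB (μ β' β'' γ' γ'' δ' δ'' ζ η pib σa ν lam : ℝ) (ξ : Fin 3 → ℝ) :
    Matrix (Fin 9) (Fin 9) ℝ :=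
  let s := ξ 0 ^ 2 + ξ 1 ^ 2 + ξ 2 ^ 2
  !![0, 0, 0, 0, 0, 0, 0, 0, 0;
     0, μ * ν, 0, 0, 0, 0, 0, 0, 0;
     0, 0, μ * ν, 0, 0, 0, 0, 0, 0;
     0, 0, 0, μ * ν, 0, 0, 0, 0, 0;
     0, 0, 0, 0, μ * β' * (ζ + δ' * s) / γ', -(μ * β' * η / γ'), 0, 0, 0;
     0, 0, 0, 0, -(μ * β'' * pib / γ''), μ * β'' * (σa + δ'' * s) / γ'', 0, 0, 0;
     0, 0, 0, 0, 0, 0, lam * s, 0, 0;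
     0, 0, 0, 0, 0, 0, 0, lam * s, 0;
     0, 0, 0, 0, 0, 0, 0, 0, lam * s]

/-!
On the kernel of `ℬ(ξ)`, the velocity and magnetic components vanish because `μν ≠ 0` and
`λ|ξ|² ≠ 0`, and the two radiative components vanish because, thanks to `ζσ_a = ηπ`, the
determinant of their `2 × 2` block is `|ξ|²(ζδ'' + σ_aδ' + δ'δ''|ξ|²) > 0`; so the kernel is
spanned by `e₁`. Multiplying an eigenvalue equation `(Ã₀)⁻¹𝒜(ξ)X = tX` by `Ã₀` gives
`𝒜(ξ)X = tÃ₀X`; for `X = x₁e₁` the velocity components of this read `μα'ξ_j x₁ = 0`, forcing `ξ = 0`.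
-/

lemma eq_zero_and_eq_zero_of_det_ne_zero {R : Type*} [CommRing R] [NoZeroDivisors R]
    {a b c d x y : R} (hdet : a * d - b * c ≠ 0)
    (h₁ : a * x + b * y = 0) (h₂ : c * x + d * y = 0) : x = 0 ∧ y = 0 := by
  constructor
  · apply (mul_eq_zero.mp (_ : (a * d - b * c) * x = 0)).resolve_left hdet
    linear_combination d * h₁ - b * h₂
  · apply (mul_eq_zero.mp (_ : (a * d - b * c) * y = 0)).resolve_left hdet
    linear_combination a * h₂ - c * h₁

lemma exists_eq_smul_single_zero_iff {n : ℕ} {R : Type*} [Semiring R] (X : Fin (n + 1) → R) :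
    (∃ c : R, X = c • Pi.single 0 1) ↔ ∀ i ≠ 0, X i = 0 := by
  constructor
  · rintro ⟨c, rfl⟩ i hi
    simp [hi]
  · intro h
    refine ⟨X 0, funext fun i => ?_⟩
    by_cases hi : i = 0
    · simp [hi]
    · simp [hi, h i hi]

theorem Matrix.mulVec_eq_smul_mulVec_of_inv_mul_mulVec_eq_smul {n K : Type*} [Fintype n]
    [DecidableEq n] [Field K] {A₀ A : Matrix n n K} (hA₀ : IsUnit A₀.det) {X : n → K} {t : K}
    (h : (A₀⁻¹ * A) *ᵥ X = t • X) : A *ᵥ X = t • A₀ *ᵥ X := by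
  rw [← mul_nonsing_inv_cancel_left A₀ A hA₀, ← mulVec_mulVec, h, mulVec_smul]

section

variable {μ ρ α' β' β'' γ' γ'' δ' δ'' ζ η pib σa ν lam B1 B2 B3 : ℝ} {ξ : Fin 3 → ℝ}

lemma skB_mulVec (X : Fin 9 → ℝ) :
    skB μ β' β'' γ' γ'' δ' δ'' ζ η pib σa ν lam ξ *ᵥ X =
      let s := ξ 0 ^ 2 + ξ 1 ^ 2 + ξ 2 ^ 2
      ![0, μ * ν * X 1, μ * ν * X 2, μ * ν * X 3,
        μ * β' / γ' * ((ζ + δ' * s) * X 4 + -η * X 5),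
        μ * β'' / γ'' * (-pib * X 4 + (σa + δ'' * s) * X 5),
        lam * s * X 6, lam * s * X 7, lam * s * X 8] := by
  ext i
  fin_cases i <;> simp [skB, mulVec, dotProduct, Fin.sum_univ_succ] <;> ring

lemma skB_mulVec_eq_zero_iff (hμ : μ ≠ 0) (hν : ν ≠ 0) (hβ' : β' ≠ 0) (hβ'' : β'' ≠ 0)
    (hγ' : γ' ≠ 0) (hγ'' : γ'' ≠ 0) (hδ' : 0 < δ') (hδ'' : 0 < δ'') (hζ : 0 ≤ ζ)
    (hσa : 0 ≤ σa) (hlam : lam ≠ 0) (hcomp : ζ * σa = η * pib)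
    (hs : 0 < ξ 0 ^ 2 + ξ 1 ^ 2 + ξ 2 ^ 2) (X : Fin 9 → ℝ) :
    skB μ β' β'' γ' γ'' δ' δ'' ζ η pib σa ν lam ξ *ᵥ X = 0 ↔ ∀ i ≠ 0, X i = 0 := by
  rw [skB_mulVec, funext_iff]
  generalize ξ 0 ^ 2 + ξ 1 ^ 2 + ξ 2 ^ 2 = s at hs ⊢
  have hdet : (ζ + δ' * s) * (σa + δ'' * s) - -η * -pib ≠ 0 := by
    have : (ζ + δ' * s) * (σa + δ'' * s) - -η * -pib =
        s * (ζ * δ'' + σa * δ' + δ' * δ'' * s) := by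
      linear_combination hcomp
    rw [this]
    positivity
  simp only [Pi.zero_apply, Fin.forall_fin_succ, cons_val_zero, cons_val_succ, mul_eq_zero,
    div_eq_zero_iff, hμ, hν, hβ', hγ', hβ'', hγ'', hlam, hs.ne', or_self, false_or, ne_eq,
    Fin.succ_ne_zero, not_false_eq_true, not_true_eq_false, forall_const, IsEmpty.forall_iff,
    Fin.succ_zero_eq_one, Fin.succ_one_eq_two, Fin.reduceSucc, true_and, and_true]
  constructor
  · rintro ⟨h1, h2, h3, h4, h5, h6, h7, h8⟩
    obtain ⟨h4, h5⟩ := eq_zero_and_eq_zero_of_det_ne_zero hdet h4 h5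
    exact ⟨h1, h2, h3, h4, h5, h6, h7, h8⟩
  · rintro ⟨h1, h2, h3, h4, h5, h6, h7, h8⟩
    simp [h1, h2, h3, h4, h5, h6, h7, h8]

lemma isUnit_det_skA0 (hμ : μ ≠ 0) (hρ : ρ ≠ 0) (hα' : α' ≠ 0) (hβ' : β' ≠ 0) (hβ'' : β'' ≠ 0)
    (hγ' : γ' ≠ 0) (hγ'' : γ'' ≠ 0) : IsUnit (skA0 μ ρ α' β' β'' γ' γ'').det := by
  simp [skA0, Fin.prod_univ_succ, hμ, hρ, hα', hβ', hβ'', hγ', hγ'']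

lemma skA_mulVec_single_zero :
    skA μ α' β' β'' B1 B2 B3 ξ *ᵥ Pi.single 0 1 =
      (μ * α') • ![0, ξ 0, ξ 1, ξ 2, 0, 0, 0, 0, 0] := by
  ext i
  fin_cases i <;> simp [skA, skAt1, skAt2, skAt3] <;> ring

lemma eq_zero_of_skA_mulVec_smul_single_eq (hμ : μ ≠ 0) (hα' : α' ≠ 0) {c t : ℝ} (hc : c ≠ 0)
    (h : skA μ α' β' β'' B1 B2 B3 ξ *ᵥ (c • Pi.single 0 1) =
      t • skA0 μ ρ α' β' β'' γ' γ'' *ᵥ (c • Pi.single 0 1)) :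
    ξ = 0 := by
  rw [mulVec_smul, mulVec_smul, skA_mulVec_single_zero, skA0, mulVec_single_one] at h
  have h1 := congrFun h 1
  have h2 := congrFun h 2
  have h3 := congrFun h 3
  simp [hc, hμ, hα'] at h1 h2 h3
  exact funext fun j => by fin_cases j <;> assumption

end

theorem stmt_7_general (μ ρbar α' β' β'' γ' γ'' δ' δ'' ζ η pib σa ν lam B1 B2 B3 : ℝ)
    (hμ : 0 < μ) (hρ : 0 < ρbar) (hα' : 0 < α') (hβ' : 0 < β') (hβ'' : 0 < β'')
    (hγ' : 0 < γ') (hγ'' : 0 < γ'') (hδ' : 0 < δ') (hδ'' : 0 < δ'')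
    (hζ : 0 < ζ) (hσa : 0 < σa)
    (hν : 0 < ν) (hlam : 0 < lam) (hcomp : ζ * σa = η * pib)
    (ξ : Fin 3 → ℝ) (hξ : ξ 0 ^ 2 + ξ 1 ^ 2 + ξ 2 ^ 2 = 1) :
    (∀ X : Fin 9 → ℝ,
        skB μ β' β'' γ' γ'' δ' δ'' ζ η pib σa ν lam ξ *ᵥ X = 0 ↔
          ∃ c : ℝ, X = c • (Pi.single (0 : Fin 9) (1:ℝ) : Fin 9 → ℝ)) ∧
    (∀ X : Fin 9 → ℝ, X ≠ 0 →
        skB μ β' β'' γ' γ'' δ' δ'' ζ η pib σa ν lam ξ *ᵥ X = 0 →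
        ∀ t : ℝ,
          ¬ ((skA0 μ ρbar α' β' β'' γ' γ'')⁻¹ * skA μ α' β' β'' B1 B2 B3 ξ) *ᵥ X
              = t • X) := by
  have hker (X : Fin 9 → ℝ) :
      skB μ β' β'' γ' γ'' δ' δ'' ζ η pib σa ν lam ξ *ᵥ X = 0 ↔
        ∃ c : ℝ, X = c • (Pi.single (0 : Fin 9) (1:ℝ) : Fin 9 → ℝ) := by
    rw [exists_eq_smul_single_zero_iff, skB_mulVec_eq_zero_iff hμ.ne' hν.ne' hβ'.ne' hβ''.ne'
      hγ'.ne' hγ''.ne' hδ' hδ'' hζ.le hσa.le hlam.ne' hcomp (hξ ▸ one_pos)]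
  refine ⟨hker, fun X hX hBX t heig => ?_⟩
  obtain ⟨c, rfl⟩ := (hker X).mp hBX
  have hc : c ≠ 0 := by
    rintro rfl
    simp at hX
  have hA₀ := isUnit_det_skA0 hμ.ne' hρ.ne' hα'.ne' hβ'.ne' hβ''.ne' hγ'.ne' hγ''.ne'
  have hξ0 : ξ = 0 := eq_zero_of_skA_mulVec_smul_single_eq hμ.ne' hα'.ne' hc
    (mulVec_eq_smul_mulVec_of_inv_mul_mulVec_eq_smul hA₀ heig)
  simp [hξ0] at hξ

/-- Shizuta–Kawashima condition for the linearized radiative Euler–MHD system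
with damping `ν > 0`: the kernel of `ℬ(ξ)` is spanned by `e₁`, and no nonzero
element of this kernel is an eigenvector of `(Ã₀)⁻¹ 𝒜(ξ)`. -/
theorem stmt_7 (μ ρbar α' β' β'' γ' γ'' δ' δ'' ζ η pib σa ν lam B1 B2 B3 : ℝ)
    (hμ : 0 < μ) (hρ : 0 < ρbar) (hα' : 0 < α') (hβ' : 0 < β') (hβ'' : 0 < β'')
    (hγ' : 0 < γ') (hγ'' : 0 < γ'') (hδ' : 0 < δ') (hδ'' : 0 < δ'')
    (hζ : 0 < ζ) (hη : 0 < η) (hpib : 0 < pib) (hσa : 0 < σa)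
    (hν : 0 < ν) (hlam : 0 < lam) (hcomp : ζ * σa = η * pib)
    (ξ : Fin 3 → ℝ) (hξ : ξ 0 ^ 2 + ξ 1 ^ 2 + ξ 2 ^ 2 = 1) :
    (∀ X : Fin 9 → ℝ,
        skB μ β' β'' γ' γ'' δ' δ'' ζ η pib σa ν lam ξ *ᵥ X = 0 ↔
          ∃ c : ℝ, X = c • (Pi.single (0 : Fin 9) (1:ℝ) : Fin 9 → ℝ)) ∧
    (∀ X : Fin 9 → ℝ, X ≠ 0 →
        skB μ β' β'' γ' γ'' δ' δ'' ζ η pib σa ν lam ξ *ᵥ X = 0 →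
        ∀ t : ℝ,
          ¬ ((skA0 μ ρbar α' β' β'' γ' γ'')⁻¹ * skA μ α' β' β'' B1 B2 B3 ξ) *ᵥ X
              = t • X) :=
  stmt_7_general μ ρbar α' β' β'' γ' γ'' δ' δ'' ζ η pib σa ν lam B1 B2 B3 hμ hρ hα' hβ' hβ'' hγ'
    hγ'' hδ' hδ'' hζ hσa hν hlam hcomp ξ hξ
end

section
/- Suppose ν = 0 in the linearized radiative Euler–MHD system, and let B̄ = (B̄₁, B̄₂, B̄₃) ≠ 0. Then the Shizuta–Kawashima condition fails: there exists a unit vector ξ ∈ ℝ³ with ξ · B̄ = 0 and a nonzero vector x ∈ ℝ³ with x · ξ = 0 such that X = (0, x₁, x₂, x₃, 0, 0, 0, 0, 0) lies in ker ℬ(ξ) and is an eigenvector of (Ã₀)⁻¹𝒜(ξ) with eigenvalue 0. -/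
/-!
With `ν = 0` the dissipation `ℬ(ξ)` has no entries in the velocity block, so every vector
`(0, x, 0, …, 0)` lies in its kernel. On such vectors `𝒜(ξ)` only sees the two scalars `x · ξ`
and `B̄ · ξ`; taking `x = B̄` and `ξ` a unit vector orthogonal to `B̄` makes both vanish, hence
`𝒜(ξ) X = 0`.
-/

open Matrix

theorem exists_dotProduct_self_eq_one_dotProduct_eq_zero {ι : Type*} [Fintype ι] [Nontrivial ι]
    (v : ι → ℝ) : ∃ ξ : ι → ℝ, ξ ⬝ᵥ ξ = 1 ∧ ξ ⬝ᵥ v = 0 := by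
  obtain ⟨ξ, hne, horth⟩ := exists_ne_zero_dotProduct_eq_zero v
  have hpos : 0 < ξ ⬝ᵥ ξ := by
    simpa using (dotProduct_star_self_pos_iff (v := ξ)).mpr hne
  refine ⟨(√(ξ ⬝ᵥ ξ))⁻¹ • ξ, ?_, by simp [smul_dotProduct, horth]⟩
  rw [smul_dotProduct, dotProduct_smul, smul_smul, smul_eq_mul, ← mul_inv,
    Real.mul_self_sqrt hpos.le, inv_mul_cancel₀ hpos.ne']

theorem skA_mulVec_velocity (μ α' β' β'' B1 B2 B3 : ℝ) (ξ x : Fin 3 → ℝ) :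
    skA μ α' β' β'' B1 B2 B3 ξ *ᵥ (![0, x 0, x 1, x 2, 0, 0, 0, 0, 0] : Fin 9 → ℝ) =
      ![μ * α' * (x ⬝ᵥ ξ), 0, 0, 0, μ * β' * (x ⬝ᵥ ξ), μ * β'' * (x ⬝ᵥ ξ),
        (x ⬝ᵥ ξ) * B1 - (![B1, B2, B3] ⬝ᵥ ξ) * x 0,
        (x ⬝ᵥ ξ) * B2 - (![B1, B2, B3] ⬝ᵥ ξ) * x 1,
        (x ⬝ᵥ ξ) * B3 - (![B1, B2, B3] ⬝ᵥ ξ) * x 2] := by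
  ext i
  fin_cases i <;>
    simp [skA, skAt1, skAt2, skAt3, mulVec, dotProduct, Fin.sum_univ_succ] <;> ring

theorem skB_zero_mulVec_velocity (μ β' β'' γ' γ'' δ' δ'' ζ η pib σa lam : ℝ)
    (ξ x : Fin 3 → ℝ) :
    skB μ β' β'' γ' γ'' δ' δ'' ζ η pib σa 0 lam ξ *ᵥ
      (![0, x 0, x 1, x 2, 0, 0, 0, 0, 0] : Fin 9 → ℝ) = 0 := by
  ext i
  fin_cases i <;> simp [skB, mulVec, dotProduct, Fin.sum_univ_succ]

theorem stmt_8_general (μ ρbar α' β' β'' γ' γ'' δ' δ'' ζ η pib σa lam B1 B2 B3 : ℝ)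
    (hB : (![B1, B2, B3] : Fin 3 → ℝ) ≠ 0) :
    ∃ ξ : Fin 3 → ℝ, ξ 0 ^ 2 + ξ 1 ^ 2 + ξ 2 ^ 2 = 1 ∧
      ξ ⬝ᵥ ![B1, B2, B3] = 0 ∧
      ∃ x : Fin 3 → ℝ, x ≠ 0 ∧ x ⬝ᵥ ξ = 0 ∧
        skB μ β' β'' γ' γ'' δ' δ'' ζ η pib σa 0 lam ξ *ᵥ
            (![0, x 0, x 1, x 2, 0, 0, 0, 0, 0] : Fin 9 → ℝ) = 0 ∧
        ((skA0 μ ρbar α' β' β'' γ' γ'')⁻¹ * skA μ α' β' β'' B1 B2 B3 ξ) *ᵥ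
            (![0, x 0, x 1, x 2, 0, 0, 0, 0, 0] : Fin 9 → ℝ)
          = (0 : ℝ) • (![0, x 0, x 1, x 2, 0, 0, 0, 0, 0] : Fin 9 → ℝ) := by
  obtain ⟨ξ, hunit, hξB⟩ := exists_dotProduct_self_eq_one_dotProduct_eq_zero ![B1, B2, B3]
  have hBξ : ![B1, B2, B3] ⬝ᵥ ξ = 0 := by rwa [dotProduct_comm]
  refine ⟨ξ, by simpa [dotProduct, Fin.sum_univ_three, sq] using hunit, hξB,
    ![B1, B2, B3], hB, hBξ, skB_zero_mulVec_velocity _ _ _ _ _ _ _ _ _ _ _ _ ξ _, ?_⟩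
  rw [← mulVec_mulVec, skA_mulVec_velocity, hBξ]
  simp [← zero_empty, cons_zero_zero]

/-- Failure of the Shizuta–Kawashima condition without damping (`ν = 0`):
there is a unit frequency `ξ ⊥ B̄` and a nonzero `x ⊥ ξ` such that
`X = (0, x, 0, 0, 0, 0, 0)` lies in `ker ℬ(ξ)` and is an eigenvector of
`(Ã₀)⁻¹ 𝒜(ξ)` with eigenvalue `0`. -/
theorem stmt_8 (μ ρbar α' β' β'' γ' γ'' δ' δ'' ζ η pib σa lam B1 B2 B3 : ℝ)
    (hμ : 0 < μ) (hρ : 0 < ρbar) (hα' : 0 < α') (hβ' : 0 < β') (hβ'' : 0 < β'')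
    (hγ' : 0 < γ') (hγ'' : 0 < γ'') (hδ' : 0 < δ') (hδ'' : 0 < δ'')
    (hζ : 0 < ζ) (hη : 0 < η) (hpib : 0 < pib) (hσa : 0 < σa)
    (hlam : 0 < lam) (hcomp : ζ * σa = η * pib)
    (hB : (![B1, B2, B3] : Fin 3 → ℝ) ≠ 0) :
    ∃ ξ : Fin 3 → ℝ, ξ 0 ^ 2 + ξ 1 ^ 2 + ξ 2 ^ 2 = 1 ∧
      ξ ⬝ᵥ ![B1, B2, B3] = 0 ∧
      ∃ x : Fin 3 → ℝ, x ≠ 0 ∧ x ⬝ᵥ ξ = 0 ∧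
        skB μ β' β'' γ' γ'' δ' δ'' ζ η pib σa 0 lam ξ *ᵥ
            (![0, x 0, x 1, x 2, 0, 0, 0, 0, 0] : Fin 9 → ℝ) = 0 ∧
        ((skA0 μ ρbar α' β' β'' γ' γ'')⁻¹ * skA μ α' β' β'' B1 B2 B3 ξ) *ᵥ
            (![0, x 0, x 1, x 2, 0, 0, 0, 0, 0] : Fin 9 → ℝ)
          = (0 : ℝ) • (![0, x 0, x 1, x 2, 0, 0, 0, 0, 0] : Fin 9 → ℝ) :=
  stmt_8_general μ ρbar α' β' β'' γ' γ'' δ' δ'' ζ η pib σa lam B1 B2 B3 hB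
end

section
/- Under the Gibbs relation and assumption ∂_θ e > 0, the function 𝒢(θ) = H_θ̄(ρ, θ) − H_θ̄(ρ, θ̄) (for fixed ρ > 0) satisfies ∂_θ H_θ̄(ρ, θ) = ρ·((θ − θ̄)/θ)·∂_θ e(ρ, θ); hence 𝒢 is strictly decreasing on (0, θ̄) and strictly increasing on (θ̄, ∞), with minimum value 0 at θ = θ̄. -/
/-- Under the Gibbs relation and `∂_θ e > 0`, the map
`𝒢(θ) = H_θ̄(ρ,θ) − H_θ̄(ρ,θ̄)` satisfies
`∂_θ H_θ̄(ρ,θ) = ρ ((θ − θ̄)/θ) ∂_θ e(ρ,θ)`, hence is strictly decreasing on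
`(0,θ̄)`, strictly increasing on `(θ̄,∞)`, with minimum value `0` at `θ = θ̄`. -/
theorem stmt_10 (e s : ℝ → ℝ → ℝ) (θbar : ℝ) (hθbar : 0 < θbar)
    (he : ContDiffOn ℝ (⊤ : ℕ∞) (fun q : ℝ × ℝ => e q.1 q.2) {q : ℝ × ℝ | 0 < q.1 ∧ 0 < q.2})
    (hs : ContDiffOn ℝ (⊤ : ℕ∞) (fun q : ℝ × ℝ => s q.1 q.2) {q : ℝ × ℝ | 0 < q.1 ∧ 0 < q.2})
    (hGibbsθ : ∀ ρ θ : ℝ, 0 < ρ → 0 < θ →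
      deriv (fun t => s ρ t) θ = (1 / θ) * deriv (fun t => e ρ t) θ)
    (heθ : ∀ ρ θ : ℝ, 0 < ρ → 0 < θ → 0 < deriv (fun t => e ρ t) θ) :
    ∀ ρ : ℝ, 0 < ρ →
      (∀ θ : ℝ, 0 < θ →
        deriv (fun t => ρ * (e ρ t - θbar * s ρ t)) θ
          = ρ * ((θ - θbar) / θ) * deriv (fun t => e ρ t) θ) ∧
      StrictAntiOn (fun θ : ℝ =>
          ρ * (e ρ θ - θbar * s ρ θ) - ρ * (e ρ θbar - θbar * s ρ θbar))
        (Set.Ioo 0 θbar) ∧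
      StrictMonoOn (fun θ : ℝ =>
          ρ * (e ρ θ - θbar * s ρ θ) - ρ * (e ρ θbar - θbar * s ρ θbar))
        (Set.Ioi θbar) ∧
      (ρ * (e ρ θbar - θbar * s ρ θbar) - ρ * (e ρ θbar - θbar * s ρ θbar) = 0) ∧
      (∀ θ ∈ Set.Ioi (0:ℝ),
        0 ≤ ρ * (e ρ θ - θbar * s ρ θ) - ρ * (e ρ θbar - θbar * s ρ θbar)) := by

  intro ρ hρ
  have hopen : IsOpen {q : ℝ × ℝ | 0 < q.1 ∧ 0 < q.2} :=
    (isOpen_lt continuous_const continuous_fst).inter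
      (isOpen_lt continuous_const continuous_snd)
  have hE : ∀ θ : ℝ, 0 < θ → DifferentiableAt ℝ (fun t => e ρ t) θ := by
    intro θ hθ
    have h1 : DifferentiableAt ℝ (fun q : ℝ × ℝ => e q.1 q.2) (ρ, θ) :=
      (he.contDiffAt (hopen.mem_nhds ⟨hρ, hθ⟩)).differentiableAt (by simp)
    exact h1.comp θ (DifferentiableAt.prodMk (differentiableAt_const _) differentiableAt_id)
  have hS : ∀ θ : ℝ, 0 < θ → DifferentiableAt ℝ (fun t => s ρ t) θ := by
    intro θ hθ
    have h1 : DifferentiableAt ℝ (fun q : ℝ × ℝ => s q.1 q.2) (ρ, θ) :=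
      (hs.contDiffAt (hopen.mem_nhds ⟨hρ, hθ⟩)).differentiableAt (by simp)
    exact h1.comp θ (DifferentiableAt.prodMk (differentiableAt_const _) differentiableAt_id)
  have hFdiff : ∀ θ : ℝ, 0 < θ →
      DifferentiableAt ℝ (fun t => ρ * (e ρ t - θbar * s ρ t)) θ := by
    intro θ hθ
    exact ((hE θ hθ).sub ((hS θ hθ).const_mul θbar)).const_mul ρ
  have hderiv : ∀ θ : ℝ, 0 < θ →
      deriv (fun t => ρ * (e ρ t - θbar * s ρ t)) θ
        = ρ * ((θ - θbar) / θ) * deriv (fun t => e ρ t) θ := by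
    intro θ hθ
    rw [deriv_const_mul (d := fun t => e ρ t - θbar * s ρ t) _ ((hE θ hθ).sub ((hS θ hθ).const_mul θbar)),
      deriv_fun_sub (hE θ hθ) ((hS θ hθ).const_mul θbar),
      deriv_const_mul _ (hS θ hθ), hGibbsθ ρ θ hρ hθ]
    field_simp
  set G : ℝ → ℝ := fun θ =>
    ρ * (e ρ θ - θbar * s ρ θ) - ρ * (e ρ θbar - θbar * s ρ θbar) with hGdef
  have hGdiff : ∀ θ : ℝ, 0 < θ → DifferentiableAt ℝ G θ := fun θ hθ =>
    (hFdiff θ hθ).sub_const _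
  have hGderiv : ∀ θ : ℝ, 0 < θ →
      deriv G θ = ρ * ((θ - θbar) / θ) * deriv (fun t => e ρ t) θ := by
    intro θ hθ
    rw [hGdef]
    rw [deriv_sub_const]
    exact hderiv θ hθ
  have hanti : StrictAntiOn G (Set.Ioc 0 θbar) := by
    apply strictAntiOn_of_deriv_neg (convex_Ioc _ _)
    · intro θ hθ
      exact (hGdiff θ hθ.1).continuousAt.continuousWithinAt
    · intro θ hθ
      rw [interior_Ioc] at hθ
      rw [hGderiv θ hθ.1]
      have h1 : (θ - θbar) / θ < 0 := div_neg_of_neg_of_pos (by linarith [hθ.2]) hθ.1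
      exact mul_neg_of_neg_of_pos (mul_neg_of_pos_of_neg hρ h1) (heθ ρ θ hρ hθ.1)
  have hmono : StrictMonoOn G (Set.Ici θbar) := by
    apply strictMonoOn_of_deriv_pos (convex_Ici _)
    · intro θ hθ
      exact (hGdiff θ (lt_of_lt_of_le hθbar hθ)).continuousAt.continuousWithinAt
    · intro θ hθ
      rw [interior_Ici] at hθ
      have hθ0 : 0 < θ := hθbar.trans hθ
      rw [hGderiv θ hθ0]
      have hθb : θbar < θ := hθ
      have h1 : 0 < (θ - θbar) / θ := div_pos (by linarith) hθ0
      exact mul_pos (mul_pos hρ h1) (heθ ρ θ hρ hθ0)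
  have hG0 : G θbar = 0 := sub_self _
  refine ⟨hderiv, hanti.mono Set.Ioo_subset_Ioc_self,
    hmono.mono (Set.Ioi_subset_Ici le_rfl), sub_self _, ?_⟩
  intro θ hθ
  rcases lt_trichotomy θ θbar with h | h | h
  · have := hanti ⟨hθ, h.le⟩ ⟨hθbar, le_rfl⟩ h
    rw [hG0] at this
    exact this.le
  · simp [h]
  · have := hmono (Set.self_mem_Ici) (Set.mem_Ici.mpr h.le) h
    rw [hG0] at this
    exact this.le
end

section
/- Let θ̄ > 0 and ρ̄ > 0 and let the Helmholtz function H_θ̄ be as above, with p, e smooth satisfying ∂_ρ p > 0, ∂_θ e > 0 on the set O₁ = {(ρ, θ) : ρ̄/2 < ρ < 2ρ̄, θ̄/2 < θ < 2θ̄}. Then there exist constants C₁, C₂ > 0 such that for all (ρ, θ) ∈ O₁: C₁(|ρ − ρ̄|² + |θ − θ̄|²) ≤ H_θ̄(ρ,θ) − (ρ − ρ̄)∂_ρ H_θ̄(ρ̄, θ̄) − H_θ̄(ρ̄, θ̄) ≤ C₂(|ρ − ρ̄|² + |θ − θ̄|²). -/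
/-!
Write `ψ = e - θ̄ s`, so that `H_θ̄ = ρ ψ`. The quantity to bound splits as
`A(ρ) + ρ (ψ(ρ,θ) - ψ(ρ,θ̄))`, where `A` is the tangent-line remainder of `ρ ↦ H_θ̄(ρ,θ̄)` at `ρ̄`.
By the Gibbs relation, `∂²_ρ H_θ̄(ρ,θ̄) = ∂_ρ p(ρ,θ̄)/ρ` and `∂_θ ψ(ρ,θ) = ∂_θ e(ρ,θ) (θ - θ̄)/θ`,
so in each variable the derivative has the sign of the displacement from the base point. The factors
`∂_ρ p/ρ` and `∂_θ e/θ` are bounded above on the closure of `O₁`, and below by a positive constant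
on a compact neighbourhood of the base point; this gives quadratic bounds there, and outside that
neighbourhood monotonicity carries the bound reached at its edge (positivity is only known on the
open set). Where `ρ` is far from `ρ̄`, the `ρ`-part alone dominates.
-/

open Set Function

theorem exists_Icc_subset_Ioo {l u a : ℝ} (ha : a ∈ Ioo l u) :
    ∃ δ > 0, Icc (a - δ) (a + δ) ⊆ Ioo l u := by
  obtain ⟨δ, hδ, hsub⟩ := Metric.nhds_basis_closedBall.mem_iff.1 (isOpen_Ioo.mem_nhds ha)
  exact ⟨δ, hδ, Real.closedBall_eq_Icc ▸ hsub⟩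

section OneVariable

variable {f f' : ℝ → ℝ} {s : Set ℝ} {a b c x : ℝ}

theorem le_of_hasDerivAt_of_mem_uIcc (hs : s.OrdConnected) (ha : a ∈ s) (hx : x ∈ s)
    (hf : ∀ y ∈ s, HasDerivAt f (f' y) y) (hf' : ∀ y ∈ s, 0 ≤ f' y * (y - a))
    (hb : b ∈ uIcc a x) : f b ≤ f x := by
  have hsub : uIcc b x ⊆ s := hs.uIcc_subset (hs.uIcc_subset ha hx hb) hx
  have hcont : ContinuousOn f (uIcc b x) := fun y hy =>
    (hf y (hsub hy)).continuousAt.continuousWithinAt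
  have hderiv : ∀ y ∈ interior (uIcc b x), HasDerivWithinAt f (f' y) (interior (uIcc b x)) y :=
    fun y hy => (hf y (hsub (interior_subset hy))).hasDerivWithinAt
  rcases le_total a x with hax | hxa
  · rw [uIcc_of_le hax] at hb
    rw [uIcc_of_le hb.2] at hcont hderiv
    refine monotoneOn_of_hasDerivWithinAt_nonneg (convex_Icc b x) hcont hderiv (fun y hy => ?_)
      (left_mem_Icc.2 hb.2) (right_mem_Icc.2 hb.2) hb.2
    rw [interior_Icc] at hy
    nlinarith [hf' y (hsub (uIcc_of_le hb.2 ▸ Ioo_subset_Icc_self hy)), hy.1, hb.1]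
  · rw [uIcc_of_ge hxa] at hb
    rw [uIcc_of_ge hb.1] at hcont hderiv
    refine antitoneOn_of_hasDerivWithinAt_nonpos (convex_Icc x b) hcont hderiv (fun y hy => ?_)
      (left_mem_Icc.2 hb.1) (right_mem_Icc.2 hb.1) hb.1
    rw [interior_Icc] at hy
    nlinarith [hf' y (hsub (uIcc_of_ge hb.1 ▸ Ioo_subset_Icc_self hy)), hy.2, hb.2]

theorem hasDerivAt_div_two_mul_sub_sq (c a y : ℝ) :
    HasDerivAt (fun y => c / 2 * (y - a) ^ 2) (c * (y - a)) y :=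
  ((((hasDerivAt_id' y).sub_const a).fun_pow 2).const_mul (c / 2)).congr_deriv (by ring)

theorem add_mul_sq_le_of_hasDerivAt (hs : s.OrdConnected) (ha : a ∈ s) (hx : x ∈ s)
    (hf : ∀ y ∈ s, HasDerivAt f (f' y) y) (hc : ∀ y ∈ s, c * (y - a) ^ 2 ≤ f' y * (y - a)) :
    f a + c / 2 * (x - a) ^ 2 ≤ f x := by
  have := le_of_hasDerivAt_of_mem_uIcc (f := fun y => f y - c / 2 * (y - a) ^ 2) hs ha hx
    (fun y hy => (hf y hy).sub (hasDerivAt_div_two_mul_sub_sq c a y))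
    (fun y hy => by nlinarith [hc y hy]) left_mem_uIcc
  linarith

theorem le_add_mul_sq_of_hasDerivAt (hs : s.OrdConnected) (ha : a ∈ s) (hx : x ∈ s)
    (hf : ∀ y ∈ s, HasDerivAt f (f' y) y) (hc : ∀ y ∈ s, f' y * (y - a) ≤ c * (y - a) ^ 2) :
    f x ≤ f a + c / 2 * (x - a) ^ 2 := by
  have := le_of_hasDerivAt_of_mem_uIcc (f := fun y => c / 2 * (y - a) ^ 2 - f y) hs ha hx
    (fun y hy => (hasDerivAt_div_two_mul_sub_sq c a y).sub (hf y hy))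
    (fun y hy => by nlinarith [hc y hy]) left_mem_uIcc
  linarith

theorem mul_sq_le_sub_mul_sub_of_le_deriv (hs : s.OrdConnected) (ha : a ∈ s) (hx : x ∈ s)
    (hf : ∀ y ∈ s, HasDerivAt f (f' y) y) (hc : ∀ y ∈ s, c ≤ f' y) :
    c * (x - a) ^ 2 ≤ (f x - f a) * (x - a) := by
  have hmono : MonotoneOn (fun y => f y - c * y) s :=
    monotoneOn_of_hasDerivWithinAt_nonneg hs.convex
      (fun y hy => ((hf y hy).sub ((hasDerivAt_id y).const_mul c)).continuousAt.continuousWithinAt)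
      (fun y hy => ((hf y (interior_subset hy)).sub
        ((hasDerivAt_id y).const_mul c)).hasDerivWithinAt)
      (fun y hy => by simpa using hc y (interior_subset hy))
  rcases le_total a x with hax | hxa
  · nlinarith [hmono ha hx hax]
  · nlinarith [hmono hx ha hxa]

theorem sub_mul_sub_le_mul_sq_of_deriv_le (hs : s.OrdConnected) (ha : a ∈ s) (hx : x ∈ s)
    (hf : ∀ y ∈ s, HasDerivAt f (f' y) y) (hc : ∀ y ∈ s, f' y ≤ c) :
    (f x - f a) * (x - a) ≤ c * (x - a) ^ 2 := by
  have := mul_sq_le_sub_mul_sub_of_le_deriv (f := fun y => -f y) (c := -c) hs ha hx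
    (fun y hy => (hf y hy).neg) fun y hy => neg_le_neg (hc y hy)
  linarith

theorem mul_sq_le_sub_of_hasDerivAt (hs : s.OrdConnected) (ha : a ∈ s) (hx : x ∈ s)
    (hf : ∀ y ∈ s, HasDerivAt f (f' y) y) (hf' : ∀ y ∈ s, 0 ≤ f' y * (y - a))
    {δ D : ℝ} (hδ : 0 < δ) (hδD : δ ≤ D) (hsub : Icc (a - δ) (a + δ) ⊆ s) (hc0 : 0 ≤ c)
    (hc : ∀ y ∈ Icc (a - δ) (a + δ), c * (y - a) ^ 2 ≤ f' y * (y - a)) (hxD : |x - a| ≤ D) :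
    c / 2 * (δ / D) ^ 2 * (x - a) ^ 2 ≤ f x - f a := by
  have hnear : ∀ y ∈ Icc (a - δ) (a + δ), f a + c / 2 * (y - a) ^ 2 ≤ f y := fun y hy =>
    add_mul_sq_le_of_hasDerivAt ordConnected_Icc ⟨by linarith, by linarith⟩ hy
      (fun z hz => hf z (hsub hz)) hc
  have hD : 0 < D := hδ.trans_le hδD
  by_cases hxδ : x ∈ Icc (a - δ) (a + δ)
  · have hratio : (δ / D) ^ 2 ≤ 1 := pow_le_one₀ (by positivity) ((div_le_one hD).2 hδD)
    have := hnear x hxδ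
    nlinarith [mul_le_mul_of_nonneg_left hratio (mul_nonneg hc0 (sq_nonneg (x - a)))]
  · -- past the near zone, `f` keeps growing from its value at the endpoint `b = a ± δ`
    have hfar : (δ / D) ^ 2 * (x - a) ^ 2 ≤ δ ^ 2 := by
      rw [div_pow, div_mul_eq_mul_div, div_le_iff₀ (by positivity)]
      exact mul_le_mul_of_nonneg_left (sq_le_sq' (abs_le.1 hxD).1 (abs_le.1 hxD).2) (sq_nonneg δ)
    obtain ⟨b, hb, hbδ⟩ : ∃ b ∈ uIcc a x, b ∈ Icc (a - δ) (a + δ) ∧ (b - a) ^ 2 = δ ^ 2 := by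
      rcases le_total a x with hax | hxa
      · refine ⟨a + δ, ?_, ⟨by linarith, le_rfl⟩, by ring⟩
        rw [uIcc_of_le hax]
        exact ⟨by linarith, not_lt.1 fun h => hxδ ⟨by linarith, h.le⟩⟩
      · refine ⟨a - δ, ?_, ⟨le_rfl, by linarith⟩, by ring⟩
        rw [uIcc_of_ge hxa]
        exact ⟨not_lt.1 fun h => hxδ ⟨h.le, by linarith⟩, by linarith⟩
    nlinarith [hnear b hbδ.1, le_of_hasDerivAt_of_mem_uIcc hs ha hx hf hf' hb,
      mul_le_mul_of_nonneg_left hfar hc0]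

end OneVariable

theorem exists_sq_bounds_of_hasDerivAt_of_deriv_pos {f f' f'' : ℝ → ℝ} {l u a : ℝ}
    (ha : a ∈ Ioo l u) (hf : ∀ x ∈ Ioo l u, HasDerivAt f (f' x) x)
    (hf' : ∀ x ∈ Ioo l u, HasDerivAt f' (f'' x) x) (hcont : ContinuousOn f'' (Icc l u))
    (hpos : ∀ x ∈ Ioo l u, 0 < f'' x) :
    ∃ α > 0, ∃ M, ∀ x ∈ Ioo l u, α * (x - a) ^ 2 ≤ f x - (x - a) * f' a - f a ∧
      f x - (x - a) * f' a - f a ≤ M * (x - a) ^ 2 := by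
  obtain ⟨δ, hδ, hsub⟩ := exists_Icc_subset_Ioo ha
  obtain ⟨c, hc, hcle⟩ := isCompact_Icc.exists_forall_le'
    (hcont.mono (hsub.trans Ioo_subset_Icc_self)) fun x hx => hpos x (hsub hx)
  obtain ⟨M, hM⟩ := isCompact_Icc.bddAbove_image hcont
  have hg (x) (hx : x ∈ Ioo l u) : HasDerivAt (fun y => f y - f' a * y) (f' x - f' a) x :=
    (hf x hx).sub ((hasDerivAt_id' x).const_mul (f' a)) |>.congr_deriv (by ring)
  have hgrowth (y) (hy : y ∈ Ioo l u) : 0 ≤ (f' y - f' a) * (y - a) := by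
    simpa using mul_sq_le_sub_mul_sub_of_le_deriv (c := 0) ordConnected_Ioo ha hy hf'
      fun z hz => (hpos z hz).le
  have hδD : δ ≤ u - l := by
    linarith [(hsub ⟨le_rfl, by linarith⟩ : a - δ ∈ Ioo l u).1,
      (hsub ⟨by linarith, le_rfl⟩ : a + δ ∈ Ioo l u).2]
  refine ⟨c / 2 * (δ / (u - l)) ^ 2, by have := hδ.trans_le hδD; positivity, M / 2,
    fun x hx => ⟨?_, ?_⟩⟩
  · have := mul_sq_le_sub_of_hasDerivAt ordConnected_Ioo ha hx hg hgrowth hδ hδD hsub hc.le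
      (fun y hy => mul_sq_le_sub_mul_sub_of_le_deriv ordConnected_Icc
        ⟨by linarith, by linarith⟩ hy (fun z hz => hf' z (hsub hz)) fun z hz => hcle z hz)
      (abs_le.2 ⟨by linarith [hx.1, ha.2], by linarith [hx.2, ha.1]⟩)
    linarith
  · have := le_add_mul_sq_of_hasDerivAt ordConnected_Ioo ha hx hg fun y hy =>
      sub_mul_sub_le_mul_sq_of_deriv_le ordConnected_Ioo ha hy hf' fun z hz =>
        hM (mem_image_of_mem f'' (Ioo_subset_Icc_self hz))
    linarith

theorem exists_sq_bounds_of_hasDerivAt_eq_mul_sub {X : Type*} [TopologicalSpace X]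
    {G k : X → ℝ → ℝ} {S K P : Set X} {l u b : ℝ} (hb : b ∈ Ioo l u)
    (hK : IsCompact K) (hSK : S ⊆ K) (hP : IsCompact P) (hPS : P ⊆ S)
    (hG : ∀ ξ ∈ S, ∀ θ ∈ Ioo l u, HasDerivAt (G ξ) (k ξ θ * (θ - b)) θ)
    (hk : ContinuousOn (uncurry k) (K ×ˢ Icc l u)) (hpos : ∀ ξ ∈ S, ∀ θ ∈ Ioo l u, 0 < k ξ θ) :
    ∃ κ > 0, ∃ M, ∀ ξ ∈ S, ∀ θ ∈ Ioo l u, 0 ≤ G ξ θ - G ξ b ∧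
      G ξ θ - G ξ b ≤ M * (θ - b) ^ 2 ∧ (ξ ∈ P → κ * (θ - b) ^ 2 ≤ G ξ θ - G ξ b) := by
  obtain ⟨δ, hδ, hsub⟩ := exists_Icc_subset_Ioo hb
  have hPδ : P ×ˢ Icc (b - δ) (b + δ) ⊆ K ×ˢ Icc l u :=
    prod_mono (hPS.trans hSK) (hsub.trans Ioo_subset_Icc_self)
  obtain ⟨c, hc, hcle⟩ := (hP.prod isCompact_Icc).exists_forall_le' (hk.mono hPδ)
    fun q hq => hpos q.1 (hPS hq.1) q.2 (hsub hq.2)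
  obtain ⟨M, hM⟩ := (hK.prod isCompact_Icc).bddAbove_image hk
  have hδD : δ ≤ u - l := by
    linarith [(hsub ⟨le_rfl, by linarith⟩ : b - δ ∈ Ioo l u).1,
      (hsub ⟨by linarith, le_rfl⟩ : b + δ ∈ Ioo l u).2]
  refine ⟨c / 2 * (δ / (u - l)) ^ 2, by have := hδ.trans_le hδD; positivity, M / 2,
    fun ξ hξ θ hθ => ⟨?_, ?_, fun hξP => ?_⟩⟩
  · exact sub_nonneg.2 <| le_of_hasDerivAt_of_mem_uIcc ordConnected_Ioo hb hθ (hG ξ hξ)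
      (fun y hy => by nlinarith [hpos ξ hξ y hy, sq_nonneg (y - b)]) left_mem_uIcc
  · have := le_add_mul_sq_of_hasDerivAt ordConnected_Ioo hb hθ (hG ξ hξ) fun y hy => by
      have : k ξ y ≤ M := hM (mem_image_of_mem (uncurry k)
        (mk_mem_prod (hSK hξ) (Ioo_subset_Icc_self hy)))
      nlinarith [sq_nonneg (y - b)]
    linarith
  · exact mul_sq_le_sub_of_hasDerivAt ordConnected_Ioo hb hθ (hG ξ hξ)
      (fun y hy => by nlinarith [hpos ξ hξ y hy, sq_nonneg (y - b)]) hδ hδD hsub hc.le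
      (fun y hy => by
        have : c ≤ k ξ y := hcle (ξ, y) ⟨hξP, hy⟩
        nlinarith [sq_nonneg (y - b)])
      (abs_le.2 ⟨by linarith [hθ.1, hb.2], by linarith [hθ.2, hb.1]⟩)

theorem min_mul_sq_add_sq_le_of_split {A B u v α β δ D : ℝ} (hα : 0 < α) (hβ : 0 ≤ β) (hδ : 0 < δ)
    (hA : α * u ^ 2 ≤ A) (hB : 0 ≤ B) (hnear : |u| ≤ δ → β * v ^ 2 ≤ B) (hv : v ^ 2 ≤ D ^ 2) :
    min β (α * δ ^ 2 / (δ ^ 2 + D ^ 2)) * (u ^ 2 + v ^ 2) ≤ A + B := by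
  set C := min β (α * δ ^ 2 / (δ ^ 2 + D ^ 2))
  have hCα : C ≤ α := (min_le_right _ _).trans <| by
    rw [div_le_iff₀ (by positivity)]; nlinarith [sq_nonneg D]
  rcases le_or_gt |u| δ with hu | hu
  · nlinarith [hnear hu, min_le_left β (α * δ ^ 2 / (δ ^ 2 + D ^ 2)), sq_nonneg u, sq_nonneg v]
  · have hu2 : δ ^ 2 ≤ u ^ 2 := by nlinarith [sq_abs u, abs_nonneg u]
    have hCδ : C * (δ ^ 2 + D ^ 2) ≤ α * δ ^ 2 :=
      (le_div_iff₀ (by positivity)).1 (min_le_right _ _)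
    have hC : 0 ≤ C := le_min hβ (by positivity)
    nlinarith [mul_nonneg (sub_nonneg.2 hCα) (sub_nonneg.2 hu2), mul_nonneg hC (sub_nonneg.2 hv)]

section PartialDerivatives

variable {f : ℝ → ℝ → ℝ} {U : Set (ℝ × ℝ)} {x y : ℝ}

theorem isOpen_setOf_pos_and_pos : IsOpen {q : ℝ × ℝ | 0 < q.1 ∧ 0 < q.2} :=
  (isOpen_lt continuous_const continuous_fst).inter (isOpen_lt continuous_const continuous_snd)

theorem hasDerivAt_left_of_uncurry (hf : DifferentiableAt ℝ (uncurry f) (x, y)) :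
    HasDerivAt (fun r => f r y) (fderiv ℝ (uncurry f) (x, y) (1, 0)) x := by
  exact hf.hasFDerivAt.comp_hasDerivAt x ((hasDerivAt_id' x).prodMk (hasDerivAt_const x y))

theorem hasDerivAt_right_of_uncurry (hf : DifferentiableAt ℝ (uncurry f) (x, y)) :
    HasDerivAt (fun t => f x t) (fderiv ℝ (uncurry f) (x, y) (0, 1)) y := by
  exact hf.hasFDerivAt.comp_hasDerivAt y ((hasDerivAt_const y x).prodMk (hasDerivAt_id' y))

theorem ContDiffOn.differentiableAt_left (hf : ContDiffOn ℝ 1 (uncurry f) U) (hU : IsOpen U)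
    (hxy : (x, y) ∈ U) : DifferentiableAt ℝ (fun r => f r y) x :=
  (hasDerivAt_left_of_uncurry ((hf.differentiableOn one_ne_zero).differentiableAt
    (hU.mem_nhds hxy))).differentiableAt

theorem ContDiffOn.differentiableAt_right (hf : ContDiffOn ℝ 1 (uncurry f) U) (hU : IsOpen U)
    (hxy : (x, y) ∈ U) : DifferentiableAt ℝ (fun t => f x t) y :=
  (hasDerivAt_right_of_uncurry ((hf.differentiableOn one_ne_zero).differentiableAt
    (hU.mem_nhds hxy))).differentiableAt

theorem ContDiffOn.continuousOn_deriv_left (hf : ContDiffOn ℝ 1 (uncurry f) U) (hU : IsOpen U) :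
    ContinuousOn (fun q : ℝ × ℝ => deriv (fun r => f r q.2) q.1) U :=
  ((ContinuousLinearMap.apply ℝ ℝ ((1 : ℝ), (0 : ℝ))).continuous.comp_continuousOn
    (hf.continuousOn_fderiv_of_isOpen hU le_rfl)).congr fun _ hq =>
      (hasDerivAt_left_of_uncurry ((hf.differentiableOn one_ne_zero).differentiableAt
        (hU.mem_nhds hq))).deriv

theorem ContDiffOn.continuousOn_deriv_right (hf : ContDiffOn ℝ 1 (uncurry f) U) (hU : IsOpen U) :
    ContinuousOn (fun q : ℝ × ℝ => deriv (fun t => f q.1 t) q.2) U :=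
  ((ContinuousLinearMap.apply ℝ ℝ ((0 : ℝ), (1 : ℝ))).continuous.comp_continuousOn
    (hf.continuousOn_fderiv_of_isOpen hU le_rfl)).congr fun _ hq =>
      (hasDerivAt_right_of_uncurry ((hf.differentiableOn one_ne_zero).differentiableAt
        (hU.mem_nhds hq))).deriv

end PartialDerivatives

section Thermodynamics

variable {p e s : ℝ → ℝ → ℝ} {ρ θ θbar : ℝ}

theorem hasDerivAt_freeEnergy_fst (hθ : θ ≠ 0) (he : DifferentiableAt ℝ (fun r => e r θ) ρ)
    (hs : DifferentiableAt ℝ (fun r => s r θ) ρ)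
    (hGibbs : deriv (fun r => s r θ) ρ = 1 / θ * (deriv (fun r => e r θ) ρ - p ρ θ / ρ ^ 2)) :
    HasDerivAt (fun r => e r θ - θ * s r θ) (p ρ θ / ρ ^ 2) ρ :=
  (he.hasDerivAt.sub (hs.hasDerivAt.const_mul θ)).congr_deriv <| by
    rw [hGibbs]; field_simp; ring

theorem hasDerivAt_freeEnergy_snd (hθ : θ ≠ 0) (he : DifferentiableAt ℝ (fun t => e ρ t) θ)
    (hs : DifferentiableAt ℝ (fun t => s ρ t) θ)
    (hGibbs : deriv (fun t => s ρ t) θ = 1 / θ * deriv (fun t => e ρ t) θ) :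
    HasDerivAt (fun t => e ρ t - θbar * s ρ t) (deriv (fun t => e ρ t) θ / θ * (θ - θbar)) θ :=
  (he.hasDerivAt.sub (hs.hasDerivAt.const_mul θbar)).congr_deriv <| by
    rw [hGibbs]; field_simp

theorem hasDerivAt_helmholtz_fst (hρ : ρ ≠ 0)
    (hψ : HasDerivAt (fun r => e r θ - θ * s r θ) (p ρ θ / ρ ^ 2) ρ) :
    HasDerivAt (fun r => r * (e r θ - θ * s r θ)) (e ρ θ - θ * s ρ θ + p ρ θ / ρ) ρ :=
  ((hasDerivAt_id' ρ).mul hψ).congr_deriv <| by field_simp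

theorem hasDerivAt_deriv_helmholtz_fst (hρ : ρ ≠ 0)
    (hψ : HasDerivAt (fun r => e r θ - θ * s r θ) (p ρ θ / ρ ^ 2) ρ)
    (hp : DifferentiableAt ℝ (fun r => p r θ) ρ) :
    HasDerivAt (fun r => e r θ - θ * s r θ + p r θ / r) (deriv (fun r => p r θ) ρ / ρ) ρ :=
  (hψ.add (hp.hasDerivAt.div (hasDerivAt_id' ρ) hρ)).congr_deriv <| by field_simp; ring

theorem exists_sq_bounds_helmholtz_sub_tangent {l u ρbar : ℝ}
    (hl : 0 < l) (hρbar : ρbar ∈ Ioo l u) (hθbar : 0 < θbar)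
    (hp : ContDiffOn ℝ 1 (uncurry p) {q : ℝ × ℝ | 0 < q.1 ∧ 0 < q.2})
    (he : ContDiffOn ℝ 1 (uncurry e) {q : ℝ × ℝ | 0 < q.1 ∧ 0 < q.2})
    (hs : ContDiffOn ℝ 1 (uncurry s) {q : ℝ × ℝ | 0 < q.1 ∧ 0 < q.2})
    (hGibbs : ∀ ρ, 0 < ρ → deriv (fun r => s r θbar) ρ =
      1 / θbar * (deriv (fun r => e r θbar) ρ - p ρ θbar / ρ ^ 2))
    (hpρ : ∀ ρ ∈ Ioo l u, 0 < deriv (fun r => p r θbar) ρ) :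
    ∃ α > 0, ∃ M, ∀ ρ ∈ Ioo l u,
      α * (ρ - ρbar) ^ 2 ≤ ρ * (e ρ θbar - θbar * s ρ θbar)
        - (ρ - ρbar) * deriv (fun r => r * (e r θbar - θbar * s r θbar)) ρbar
        - ρbar * (e ρbar θbar - θbar * s ρbar θbar) ∧
      ρ * (e ρ θbar - θbar * s ρ θbar)
        - (ρ - ρbar) * deriv (fun r => r * (e r θbar - θbar * s r θbar)) ρbar
        - ρbar * (e ρbar θbar - θbar * s ρbar θbar) ≤ M * (ρ - ρbar) ^ 2 := by
  have hQ := isOpen_setOf_pos_and_pos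
  have hψ {r : ℝ} (hr : 0 < r) := hasDerivAt_freeEnergy_fst hθbar.ne'
    (he.differentiableAt_left hQ ⟨hr, hθbar⟩) (hs.differentiableAt_left hQ ⟨hr, hθbar⟩)
    (hGibbs r hr)
  rw [(hasDerivAt_helmholtz_fst (hl.trans hρbar.1).ne' (hψ (hl.trans hρbar.1))).deriv]
  exact exists_sq_bounds_of_hasDerivAt_of_deriv_pos hρbar
    (fun r hr => hasDerivAt_helmholtz_fst (hl.trans hr.1).ne' (hψ (hl.trans hr.1)))
    (fun r hr => hasDerivAt_deriv_helmholtz_fst (hl.trans hr.1).ne' (hψ (hl.trans hr.1))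
      (hp.differentiableAt_left hQ ⟨hl.trans hr.1, hθbar⟩))
    (((hp.continuousOn_deriv_left hQ).comp (continuous_id'.prodMk continuous_const).continuousOn
      fun r hr => ⟨hl.trans_le hr.1, hθbar⟩).div continuousOn_id fun r hr => (hl.trans_le hr.1).ne')
    (fun r hr => div_pos (hpρ r hr) (hl.trans hr.1))

theorem exists_sq_bounds_freeEnergy_sub {P : Set ℝ} {l u l' u' : ℝ}
    (hl : 0 < l) (hl' : 0 < l') (hθbar : θbar ∈ Ioo l u) (hP : IsCompact P) (hPS : P ⊆ Ioo l' u')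
    (he : ContDiffOn ℝ 1 (uncurry e) {q : ℝ × ℝ | 0 < q.1 ∧ 0 < q.2})
    (hs : ContDiffOn ℝ 1 (uncurry s) {q : ℝ × ℝ | 0 < q.1 ∧ 0 < q.2})
    (hGibbs : ∀ ρ θ, 0 < ρ → 0 < θ →
      deriv (fun t => s ρ t) θ = 1 / θ * deriv (fun t => e ρ t) θ)
    (heθ : ∀ ρ ∈ Ioo l' u', ∀ θ ∈ Ioo l u, 0 < deriv (fun t => e ρ t) θ) :
    ∃ κ > 0, ∃ M, ∀ ρ ∈ Ioo l' u', ∀ θ ∈ Ioo l u,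
      0 ≤ e ρ θ - θbar * s ρ θ - (e ρ θbar - θbar * s ρ θbar) ∧
      e ρ θ - θbar * s ρ θ - (e ρ θbar - θbar * s ρ θbar) ≤ M * (θ - θbar) ^ 2 ∧
      (ρ ∈ P → κ * (θ - θbar) ^ 2 ≤ e ρ θ - θbar * s ρ θ - (e ρ θbar - θbar * s ρ θbar)) := by
  have hQ := isOpen_setOf_pos_and_pos
  exact exists_sq_bounds_of_hasDerivAt_eq_mul_sub (G := fun ρ t => e ρ t - θbar * s ρ t)
    hθbar isCompact_Icc Ioo_subset_Icc_self hP hPS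
    (fun ρ hρ t ht => hasDerivAt_freeEnergy_snd (hl.trans ht.1).ne'
      (he.differentiableAt_right hQ ⟨hl'.trans hρ.1, hl.trans ht.1⟩)
      (hs.differentiableAt_right hQ ⟨hl'.trans hρ.1, hl.trans ht.1⟩)
      (hGibbs ρ t (hl'.trans hρ.1) (hl.trans ht.1)))
    (((he.continuousOn_deriv_right hQ).mono fun q hq =>
      ⟨hl'.trans_le hq.1.1, hl.trans_le hq.2.1⟩).div continuous_snd.continuousOn
      fun q hq => (hl.trans_le hq.2.1).ne')
    (fun ρ hρ t ht => div_pos (heθ ρ hρ t ht) (hl.trans ht.1))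

end Thermodynamics

/-- Quadratic coercivity of the relative Helmholtz function on the set
`O₁ = {(ρ,θ) : ρ̄/2 < ρ < 2ρ̄, θ̄/2 < θ < 2θ̄}`. -/
theorem stmt_11 (p e s : ℝ → ℝ → ℝ) (ρbar θbar : ℝ) (hρbar : 0 < ρbar) (hθbar : 0 < θbar)
    (hp : ContDiffOn ℝ 2 (fun q : ℝ × ℝ => p q.1 q.2) {q : ℝ × ℝ | 0 < q.1 ∧ 0 < q.2})
    (he : ContDiffOn ℝ 2 (fun q : ℝ × ℝ => e q.1 q.2) {q : ℝ × ℝ | 0 < q.1 ∧ 0 < q.2})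
    (hs : ContDiffOn ℝ 2 (fun q : ℝ × ℝ => s q.1 q.2) {q : ℝ × ℝ | 0 < q.1 ∧ 0 < q.2})
    (hGibbsθ : ∀ ρ θ : ℝ, 0 < ρ → 0 < θ →
      deriv (fun t => s ρ t) θ = (1 / θ) * deriv (fun t => e ρ t) θ)
    (hGibbsρ : ∀ ρ θ : ℝ, 0 < ρ → 0 < θ →
      deriv (fun r => s r θ) ρ = (1 / θ) * (deriv (fun r => e r θ) ρ - p ρ θ / ρ ^ 2))
    (hpρ : ∀ ρ θ : ℝ, ρbar / 2 < ρ → ρ < 2 * ρbar → θbar / 2 < θ → θ < 2 * θbar →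
      0 < deriv (fun r => p r θ) ρ)
    (heθ : ∀ ρ θ : ℝ, ρbar / 2 < ρ → ρ < 2 * ρbar → θbar / 2 < θ → θ < 2 * θbar →
      0 < deriv (fun t => e ρ t) θ) :
    ∃ C₁ > (0:ℝ), ∃ C₂ > (0:ℝ),
      ∀ ρ θ : ℝ, ρbar / 2 < ρ → ρ < 2 * ρbar → θbar / 2 < θ → θ < 2 * θbar →
        C₁ * (|ρ - ρbar| ^ 2 + |θ - θbar| ^ 2) ≤
            ρ * (e ρ θ - θbar * s ρ θ)
              - (ρ - ρbar) * deriv (fun r => r * (e r θbar - θbar * s r θbar)) ρbar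
              - ρbar * (e ρbar θbar - θbar * s ρbar θbar) ∧
          ρ * (e ρ θ - θbar * s ρ θ)
              - (ρ - ρbar) * deriv (fun r => r * (e r θbar - θbar * s r θbar)) ρbar
              - ρbar * (e ρbar θbar - θbar * s ρbar θbar) ≤
            C₂ * (|ρ - ρbar| ^ 2 + |θ - θbar| ^ 2) := by
  obtain ⟨α, hα, MA, hA⟩ := exists_sq_bounds_helmholtz_sub_tangent (l := ρbar / 2)
    (u := 2 * ρbar) (ρbar := ρbar) (by positivity) ⟨by linarith, by linarith⟩ hθbar
    (hp.of_le one_le_two) (he.of_le one_le_two) (hs.of_le one_le_two)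
    (fun ρ hρ => hGibbsρ ρ θbar hρ hθbar)
    fun ρ hρ => hpρ ρ θbar hρ.1 hρ.2 (by linarith) (by linarith)
  obtain ⟨κ, hκ, MK, hK⟩ := exists_sq_bounds_freeEnergy_sub (l := θbar / 2) (u := 2 * θbar)
    (l' := ρbar / 2) (u' := 2 * ρbar) (θbar := θbar) (P := Icc (3 * ρbar / 4) (5 * ρbar / 4))
    (by positivity) (by positivity) ⟨by linarith, by linarith⟩ isCompact_Icc
    (Icc_subset_Ioo (by linarith) (by linarith)) (he.of_le one_le_two) (hs.of_le one_le_two)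
    hGibbsθ fun ρ hρ θ hθ => heθ ρ θ hρ.1 hρ.2 hθ.1 hθ.2
  refine ⟨min (ρbar / 2 * κ) (α * (ρbar / 4) ^ 2 / ((ρbar / 4) ^ 2 + θbar ^ 2)), by positivity,
    |MA| + 2 * ρbar * |MK| + 1, by positivity, fun ρ θ h1 h2 h3 h4 => ?_⟩
  obtain ⟨hAl, hAu⟩ := hA ρ ⟨h1, h2⟩
  obtain ⟨hK0, hKu, hKl⟩ := hK ρ ⟨h1, h2⟩ θ ⟨h3, h4⟩
  rw [sq_abs, sq_abs]
  constructor
  · linear_combination min_mul_sq_add_sq_le_of_split (β := ρbar / 2 * κ) (δ := ρbar / 4)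
      hα (by positivity) (by positivity) hAl (mul_nonneg (by linarith : (0:ℝ) ≤ ρ) hK0)
      (fun hu => by
        have := hKl ⟨by linarith [(abs_le.1 hu).1], by linarith [(abs_le.1 hu).2]⟩
        linarith [mul_le_mul_of_nonneg_left this (by linarith : (0:ℝ) ≤ ρ),
          mul_le_mul_of_nonneg_right h1.le (mul_nonneg hκ.le (sq_nonneg (θ - θbar)))])
      (show (θ - θbar) ^ 2 ≤ θbar ^ 2 from sq_le_sq' (by linarith) (by linarith))
  · have hρK := mul_le_mul h2.le (hKu.trans (mul_le_mul_of_nonneg_right (le_abs_self MK)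
      (sq_nonneg _))) hK0 (by linarith)
    linarith [mul_le_mul_of_nonneg_right (le_abs_self MA) (sq_nonneg (ρ - ρbar)),
      mul_nonneg (abs_nonneg MA) (sq_nonneg (θ - θbar)),
      mul_nonneg (by positivity : 0 ≤ 2 * ρbar * |MK|) (sq_nonneg (ρ - ρbar)),
      sq_nonneg (ρ - ρbar), sq_nonneg (θ - θbar)]
end
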